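/- arXiv:2304.11504 — 3 statements merged into one kernel-verified Lean document; each statement's English description precedes it below -/
import Mathlib

section
/- If a symmetric strategy pair (x̃, x̃) is efficient (maximizes π(x,y)+π(y,x) over all mixed strategy pairs) and is a Nash equilibrium of the material game, then (x̃, x̃) is a loser-best Nash equilibrium; that is, for every Nash equilibrium (x*, y*), min{π(x̃,x̃), π(x̃,x̃)} ≥ min{π(x*,y*), π(y*,x*)}. -/
noncomputable section
namespace Evo

open Finset

def IsMixed {X : Type*} [Fintype X] (x : X → ℝ) : Prop :=
  (∀ a, 0 ≤ x a) ∧ ∑ a, x a = 1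

def payoff {X : Type*} [Fintype X] (p : X → X → ℝ) (x y : X → ℝ) : ℝ :=
  ∑ a, ∑ b, x a * y b * p a b

def totalPay {X : Type*} [Fintype X] (p : X → X → ℝ) (x y : X → ℝ) : ℝ :=
  payoff p x y + payoff p y x

def purePt {X : Type*} [DecidableEq X] (a : X) : X → ℝ := fun b => if b = a then 1 else 0

def NashEq {X : Type*} [Fintype X] (p : X → X → ℝ) (x y : X → ℝ) : Prop :=
  IsMixed x ∧ IsMixed y ∧
    (∀ x', IsMixed x' → payoff p x' y ≤ payoff p x y) ∧
    (∀ y', IsMixed y' → payoff p y' x ≤ payoff p y x)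

def Efficient {X : Type*} [Fintype X] (p : X → X → ℝ) (x y : X → ℝ) : Prop :=
  IsMixed x ∧ IsMixed y ∧
    ∀ x' y', IsMixed x' → IsMixed y' → totalPay p x' y' ≤ totalPay p x y

def LoserBest {X : Type*} [Fintype X] (p : X → X → ℝ) (x y : X → ℝ) : Prop :=
  NashEq p x y ∧ ∀ x' y', NashEq p x' y' →
    min (payoff p x' y') (payoff p y' x') ≤ min (payoff p x y) (payoff p y x)

/-- a symmetric efficient Nash equilibrium (x̃,x̃) is loser-best. -/
theorem symmetric_efficient_nash_is_loser_best {X : Type*} [Fintype X]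
    (p : X → X → ℝ) (xt : X → ℝ)
    (heff : Efficient p xt xt) (hnash : NashEq p xt xt) :
    ∀ xs ys : X → ℝ, NashEq p xs ys →
      min (payoff p xs ys) (payoff p ys xs) ≤ min (payoff p xt xt) (payoff p xt xt) := by
  intro xs ys hne
  have htot : totalPay p xs ys ≤ totalPay p xt xt :=
    heff.2.2 xs ys hne.1 hne.2.1
  simp only [totalPay] at htot
  rcases min_cases (payoff p xs ys) (payoff p ys xs) with ⟨h, hle⟩ | ⟨h, hle⟩ <;>
    rw [h] <;> simp only [min_self] <;> linarith

end Evo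
end
end

section
/- If a symmetric strategy pair (x̃, x̃) is an efficient Nash equilibrium of the material game, then every loser-best Nash equilibrium (x̂, ŷ) is efficient, i.e., π(x̂,ŷ)+π(ŷ,x̂) = π(x̃,x̃)+π(x̃,x̃). -/
noncomputable section
namespace Evo

open Finset

/-- if (x̃,x̃) is an efficient Nash equilibrium, every loser-best
Nash equilibrium (x̂,ŷ) is efficient, i.e. has the same total payoff. -/
theorem loser_best_is_efficient {X : Type*} [Fintype X]
    (p : X → X → ℝ) (xt : X → ℝ)
    (heff : Efficient p xt xt) (hnash : NashEq p xt xt) :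
    ∀ xh yh : X → ℝ, LoserBest p xh yh →
      totalPay p xh yh = payoff p xt xt + payoff p xt xt := by
  intro xh yh ⟨hne, hlb⟩
  have h1 := hlb xt xt hnash
  rw [min_self] at h1
  have h2 := heff.2.2 xh yh hne.1 hne.2.1
  have h3 : min (payoff p xh yh) (payoff p yh xh) ≤ payoff p xh yh := min_le_left _ _
  have h4 : min (payoff p xh yh) (payoff p yh xh) ≤ payoff p yh xh := min_le_right _ _
  simp only [totalPay] at *
  linarith

end Evo
end
end

section
/- In the game where both players have utility U(x,y)=π(x,y)+π(y,x), the set of loser-best Nash equilibria equals the set of efficient strategy pairs. -/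
noncomputable section
namespace Evo

open Finset

def NashEqU {X : Type*} [Fintype X] (U1 U2 : (X → ℝ) → (X → ℝ) → ℝ) (x y : X → ℝ) : Prop :=
  IsMixed x ∧ IsMixed y ∧
    (∀ x', IsMixed x' → U1 x' y ≤ U1 x y) ∧
    (∀ y', IsMixed y' → U2 y' x ≤ U2 y x)

/-- Loser-best Nash equilibrium of the game where both players' utility is `U`. -/
def LoserBestU {X : Type*} [Fintype X] (U : (X → ℝ) → (X → ℝ) → ℝ) (x y : X → ℝ) : Prop :=
  NashEqU U U x y ∧ ∀ x' y', NashEqU U U x' y' →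
    min (U x' y') (U y' x') ≤ min (U x y) (U y x)

lemma totalPay_comm' {X : Type*} [Fintype X] (p : X → X → ℝ) (x y : X → ℝ) :
    totalPay p x y = totalPay p y x := add_comm _ _

lemma isCompact_mixed {X : Type*} [Fintype X] :
    IsCompact {x : X → ℝ | IsMixed x} := by
  have hsub : {x : X → ℝ | IsMixed x} ⊆ Set.pi Set.univ (fun _ => Set.Icc (0:ℝ) 1) := by
    rintro x ⟨h0, h1⟩ a _
    refine ⟨h0 a, ?_⟩
    calc x a ≤ ∑ b, x b := Finset.single_le_sum (fun b _ => h0 b) (Finset.mem_univ a)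
    _ = 1 := h1
  have hclosed : IsClosed {x : X → ℝ | IsMixed x} := by
    have h1 : IsClosed {x : X → ℝ | ∀ a, 0 ≤ x a} := by
      have : {x : X → ℝ | ∀ a, 0 ≤ x a} = ⋂ a, {x : X → ℝ | 0 ≤ x a} := by
        ext x; simp
      rw [this]
      exact isClosed_iInter fun a => isClosed_le continuous_const (continuous_apply a)
    have h2 : IsClosed {x : X → ℝ | ∑ a, x a = 1} :=
      isClosed_eq (continuous_finset_sum _ fun a _ => continuous_apply a) continuous_const
    exact h1.inter h2
  exact (isCompact_univ_pi fun _ => isCompact_Icc).of_isClosed_subset hclosed hsub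

lemma continuous_totalPay {X : Type*} [Fintype X] (p : X → X → ℝ) :
    Continuous (fun q : (X → ℝ) × (X → ℝ) => totalPay p q.1 q.2) := by
  unfold totalPay payoff
  fun_prop

/-- in the game where both players have utility U(x,y)=π(x,y)+π(y,x),
the loser-best Nash equilibria are exactly the efficient strategy pairs. -/
theorem loser_best_of_efficient_type_eq_efficient {X : Type*} [Fintype X]
    (p : X → X → ℝ) (x y : X → ℝ) :
    LoserBestU (totalPay p) x y ↔ Efficient p x y := by
  constructor
  · rintro ⟨⟨hx, hy, -, -⟩, hlb⟩
    refine ⟨hx, hy, fun x' y' hx' hy' => ?_⟩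
    -- pick a maximizer of totalPay on the compact set of mixed pairs
    have hne0 : Set.Nonempty ({z : X → ℝ | IsMixed z} ×ˢ {z : X → ℝ | IsMixed z}) :=
      ⟨(x, y), hx, hy⟩
    obtain ⟨⟨a, b⟩, hab, hmax⟩ :=
      (isCompact_mixed.prod isCompact_mixed).exists_isMaxOn hne0
        ((continuous_totalPay p).continuousOn)
    have hmax' : ∀ u v, IsMixed u → IsMixed v → totalPay p u v ≤ totalPay p a b :=
      fun u v hu hv => hmax (Set.mk_mem_prod hu hv)
    have hne : NashEqU (totalPay p) (totalPay p) a b := by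
      refine ⟨hab.1, hab.2, fun z hz => hmax' z b hz hab.2, fun z hz => ?_⟩
      rw [totalPay_comm' p z a, totalPay_comm' p b a]
      exact hmax' a z hab.1 hz
    have h1 := hlb a b hne
    rw [totalPay_comm' p b a, min_self, totalPay_comm' p y x, min_self] at h1
    exact le_trans (hmax' x' y' hx' hy') h1
  · rintro ⟨hx, hy, hmax⟩
    refine ⟨⟨hx, hy, fun x' hx' => hmax x' y hx' hy, fun y' hy' => ?_⟩, ?_⟩
    · rw [totalPay_comm' p y' x, totalPay_comm' p y x]
      exact hmax x y' hx hy'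
    · rintro x' y' ⟨hx', hy', -, -⟩
      rw [totalPay_comm' p y x, min_self]
      exact le_trans (min_le_left _ _) (hmax x' y' hx' hy')

end Evo
end
end
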